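/- There exists a group homomorphism χ : H → ℂˣ uniquely determined by the following values on generators: (1) on the class of a permutation matrix permuting the variables X₀,X₁,X₂ among themselves and X₃,X₄,X₅ among themselves, χ is the sign of the permutation; (2) on the class of the block-swap permutation X₀↔X₃, X₁↔X₄, X₂↔X₅, χ equals −1; (3) on the class of a diagonal matrix diag(ζ₀,…,ζ₅) with each ζᵢ a cube root of unity and ζ₀ζ₁ζ₂ = ζ₃ζ₄ζ₅, χ equals ζ₀ζ₁ζ₂. Moreover, the kernel of χ is a subgroup of H of index 6 and of order 972. -/

import Mathlib

open Matrix

/-- The subgroup of nonzero scalar matrices inside `GL₆(ℂ)`. -/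
def scalarSubgroup : Subgroup (GL (Fin 6) ℂ) :=
  (Units.map (Matrix.scalar (Fin 6) : ℂ →+* Matrix (Fin 6) (Fin 6) ℂ).toMonoidHom).range

instance scalarSubgroup_normal : scalarSubgroup.Normal := by
  constructor
  rintro x ⟨c, rfl⟩ g
  refine ⟨c, ?_⟩
  apply Units.ext
  have h : (Matrix.scalar (Fin 6)) (c : ℂ) * (↑g⁻¹ : Matrix (Fin 6) (Fin 6) ℂ) =
      (↑g⁻¹ : Matrix (Fin 6) (Fin 6) ℂ) * (Matrix.scalar (Fin 6)) (c : ℂ) :=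
    Matrix.scalar_commute _ (fun r => Commute.all _ r) _
  show (Matrix.scalar (Fin 6)) (c : ℂ) =
    ((↑g : Matrix (Fin 6) (Fin 6) ℂ) * (Matrix.scalar (Fin 6)) (c : ℂ)) *
      (↑g⁻¹ : Matrix (Fin 6) (Fin 6) ℂ)
  rw [mul_assoc, h, ← mul_assoc, Units.mul_inv, one_mul]

/-- `PGL₆(ℂ)`: the quotient of `GL₆(ℂ)` by its subgroup of nonzero scalar matrices. -/
abbrev PGL6 := GL (Fin 6) ℂ ⧸ scalarSubgroup

/-- A permutation `σ` of `{0,…,5}` preserves the partition `{{0,1,2},{3,4,5}}` if it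
permutes each block within itself or swaps the two blocks. -/
def PreservesPartition (σ : Equiv.Perm (Fin 6)) : Prop :=
  (∀ i : Fin 6, ((σ i : ℕ) < 3 ↔ (i : ℕ) < 3)) ∨
    (∀ i : Fin 6, ((σ i : ℕ) < 3 ↔ ¬ (i : ℕ) < 3))

/-- The classes in `PGL₆(ℂ)` of permutation matrices of partition-preserving
permutations. -/
def permGens : Set PGL6 :=
  {x | ∃ (A : GL (Fin 6) ℂ) (σ : Equiv.Perm (Fin 6)), PreservesPartition σ ∧
    (A : Matrix (Fin 6) (Fin 6) ℂ) = σ.permMatrix ℂ ∧ x = QuotientGroup.mk A}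

/-- The classes in `PGL₆(ℂ)` of diagonal matrices `diag(ζ₀,…,ζ₅)` with all `ζᵢ` cube
roots of unity and `ζ₀ζ₁ζ₂ = ζ₃ζ₄ζ₅`. -/
def diagGens : Set PGL6 :=
  {x | ∃ (A : GL (Fin 6) ℂ) (ζ : Fin 6 → ℂ), (∀ i, ζ i ^ 3 = 1) ∧
    ζ 0 * ζ 1 * ζ 2 = ζ 3 * ζ 4 * ζ 5 ∧
    (A : Matrix (Fin 6) (Fin 6) ℂ) = Matrix.diagonal ζ ∧ x = QuotientGroup.mk A}

/-- The subgroup `H ⊂ PGL₆(ℂ)` generated by the partition-preserving permutation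
matrices and the admissible diagonal matrices. -/
def Hgroup : Subgroup PGL6 := Subgroup.closure (permGens ∪ diagGens)


/-- The block-swap permutation `0↔3, 1↔4, 2↔5` of `{0,…,5}`. -/
def blockSwap : Equiv.Perm (Fin 6) :=
  Equiv.swap 0 3 * Equiv.swap 1 4 * Equiv.swap 2 5

/-- The prescribed values of the character `χ` on the generators of `H`:
(1) on a permutation matrix permuting `X₀,X₁,X₂` among themselves and `X₃,X₄,X₅` among
themselves it is the sign of the permutation; (2) on the block swap
`X₀↔X₃, X₁↔X₄, X₂↔X₅` it is `−1`; (3) on a diagonal matrix `diag(ζ₀,…,ζ₅)` with the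
`ζᵢ` cube roots of unity and `ζ₀ζ₁ζ₂ = ζ₃ζ₄ζ₅` it is `ζ₀ζ₁ζ₂`. -/
def ChiCond (χ : Hgroup →* ℂˣ) : Prop :=
  (∀ (A : GL (Fin 6) ℂ) (σ : Equiv.Perm (Fin 6)),
      (∀ i : Fin 6, ((σ i : ℕ) < 3 ↔ (i : ℕ) < 3)) →
      (A : Matrix (Fin 6) (Fin 6) ℂ) = σ.permMatrix ℂ →
      ∀ hA : (QuotientGroup.mk A : PGL6) ∈ Hgroup,
        (χ ⟨QuotientGroup.mk A, hA⟩ : ℂ) = ((Equiv.Perm.sign σ : ℤ) : ℂ)) ∧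
  (∀ A : GL (Fin 6) ℂ,
      (A : Matrix (Fin 6) (Fin 6) ℂ) = blockSwap.permMatrix ℂ →
      ∀ hA : (QuotientGroup.mk A : PGL6) ∈ Hgroup,
        (χ ⟨QuotientGroup.mk A, hA⟩ : ℂ) = -1) ∧
  (∀ (A : GL (Fin 6) ℂ) (ζ : Fin 6 → ℂ), (∀ i, ζ i ^ 3 = 1) →
      ζ 0 * ζ 1 * ζ 2 = ζ 3 * ζ 4 * ζ 5 →
      (A : Matrix (Fin 6) (Fin 6) ℂ) = Matrix.diagonal ζ →
      ∀ hA : (QuotientGroup.mk A : PGL6) ∈ Hgroup,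
        (χ ⟨QuotientGroup.mk A, hA⟩ : ℂ) = ζ 0 * ζ 1 * ζ 2)

/-!
Every element of `H` is the class of a monomial matrix `P_σ · diag ζ` with `σ` preserving the
partition, the `ζ i` cube roots of unity and `ζ₀ζ₁ζ₂ = ζ₃ζ₄ζ₅`; these admissible matrices form a
subgroup of `GL₆(ℂ)` mapping onto `H`, and two of them have the same class exactly when they differ
by a cube root of unity. Since `det (P_σ · diag ζ) = sgn σ · (ζ₀ζ₁ζ₂)²` and `(ζ₀ζ₁ζ₂)³ = 1`, the
prescribed values are those of `A ↦ (det A)⁻¹`, a homomorphism that is trivial on the scalar cube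
roots of unity and hence descends to `χ` on `H`. Normalising `ζ₀ = 1` makes the representative
unique, so `|H| = 72 · 3⁴ = 5832` (`2 · 3!²` permutations, free `ζ₁, …, ζ₄`). Finally `χ⁶ = 1`
and `χ` takes the values `-1` and a primitive cube root of unity, so its image is `μ₆` and its
kernel has index `6` and order `972`.
-/

open Equiv

namespace Matrix

variable {n R : Type*} [Fintype n] [DecidableEq n]

lemma permMatrix_mul_diagonal_apply [NonAssocSemiring R] (σ : Perm n) (d : n → R) (i j : n) :
    (σ.permMatrix R * diagonal d) i j = if σ i = j then d j else 0 := by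
  simp [mul_diagonal, PEquiv.toMatrix_apply]

lemma diagonal_mul_permMatrix [NonAssocSemiring R] (σ : Perm n) (d : n → R) :
    diagonal d * σ.permMatrix R = σ.permMatrix R * diagonal (d ∘ σ.symm) := by
  ext i j
  rw [permMatrix_mul_diagonal_apply, diagonal_mul]
  split_ifs with h
  · subst h; simp [PEquiv.toMatrix_apply]
  · simp [PEquiv.toMatrix_apply, h]

lemma permMatrix_mul_diagonal_mul [Semiring R] (σ τ : Perm n) (d e : n → R) :
    σ.permMatrix R * diagonal d * (τ.permMatrix R * diagonal e) =
      (τ * σ).permMatrix R * diagonal ((d ∘ τ.symm) * e) := by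
  rw [permMatrix_mul, Matrix.mul_assoc, ← Matrix.mul_assoc (diagonal d), diagonal_mul_permMatrix,
    Matrix.mul_assoc, diagonal_mul_diagonal', Matrix.mul_assoc]
  rfl

lemma permMatrix_mul_diagonal_inj [Semiring R] {σ τ : Perm n} {d e : n → R}
    (hd : ∀ i, d i ≠ 0) :
    σ.permMatrix R * diagonal d = τ.permMatrix R * diagonal e ↔ σ = τ ∧ d = e := by
  refine ⟨fun h => ?_, fun ⟨hστ, hde⟩ => hστ ▸ hde ▸ rfl⟩
  have hστ : σ = τ := by
    ext i
    have := congrFun (congrFun h i) (σ i)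
    rw [permMatrix_mul_diagonal_apply, permMatrix_mul_diagonal_apply, if_pos rfl] at this
    by_contra hne
    rw [if_neg (Ne.symm hne)] at this
    exact hd _ this
  subst hστ
  refine ⟨rfl, funext fun j => ?_⟩
  simpa [permMatrix_mul_diagonal_apply] using congrFun (congrFun h (σ.symm j)) j

lemma det_permMatrix_mul_diagonal [CommRing R] (σ : Perm n) (d : n → R) :
    det (σ.permMatrix R * diagonal d) = Perm.sign σ * ∏ i, d i := by
  rw [det_mul, det_permutation, det_diagonal]

lemma smul_permMatrix_mul_diagonal [Semiring R] (c : R) (σ : Perm n) (d : n → R) :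
    c • (σ.permMatrix R * diagonal d) = σ.permMatrix R * diagonal (c • d) := by
  ext i j
  rw [Matrix.smul_apply, permMatrix_mul_diagonal_apply, permMatrix_mul_diagonal_apply]
  split_ifs <;> simp

variable {K : Type*} [Field K]

def monomialGL (σ : Perm n) (d : n → K) (hd : ∀ i, d i ≠ 0) : GL n K :=
  GeneralLinearGroup.mkOfDetNeZero (σ.permMatrix K * diagonal d) <| by
    rw [det_permMatrix_mul_diagonal]
    refine mul_ne_zero ?_ (Finset.prod_ne_zero_iff.mpr fun i _ => hd i)
    rcases Int.units_eq_one_or (Perm.sign σ) with h | h <;> simp [h]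

@[simp]
lemma coe_monomialGL (σ : Perm n) (d : n → K) (hd : ∀ i, d i ≠ 0) :
    (monomialGL σ d hd : Matrix n n K) = σ.permMatrix K * diagonal d :=
  rfl

def permGL (σ : Perm n) : GL n K :=
  monomialGL σ 1 fun _ => one_ne_zero

@[simp]
lemma coe_permGL (σ : Perm n) : ((permGL σ : GL n K) : Matrix n n K) = σ.permMatrix K := by
  simp [permGL]

end Matrix

lemma Subgroup.prime_dvd_card_of_mem {G : Type*} [Group G] (S : Subgroup G) {p : ℕ}
    [Fact p.Prime] {g : G} (hg : g ∈ S) (hp : g ^ p = 1) (h1 : g ≠ 1) : p ∣ Nat.card S := by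
  simpa [orderOf_eq_prime hp h1] using S.orderOf_dvd_natCard hg

section Blocks

lemma preservesPartition_one : PreservesPartition 1 :=
  Or.inl fun _ => Iff.rfl

lemma PreservesPartition.mul {σ τ : Perm (Fin 6)} (hσ : PreservesPartition σ)
    (hτ : PreservesPartition τ) : PreservesPartition (σ * τ) := by
  rcases hσ with hσ | hσ <;> rcases hτ with hτ | hτ
  · exact Or.inl fun i => (hσ (τ i)).trans (hτ i)
  · exact Or.inr fun i => (hσ (τ i)).trans (hτ i)
  · exact Or.inr fun i => (hσ (τ i)).trans (not_congr (hτ i))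
  · exact Or.inl fun i => ((hσ (τ i)).trans (not_congr (hτ i))).trans not_not

lemma PreservesPartition.inv {σ : Perm (Fin 6)} (hσ : PreservesPartition σ) :
    PreservesPartition σ⁻¹ := by
  rcases hσ with hσ | hσ
  · exact Or.inl fun i => by simpa using (hσ (σ⁻¹ i)).symm
  · exact Or.inr fun i => by simpa using (not_congr (hσ (σ⁻¹ i))).symm

def lowBlock : Finset (Fin 6) := {i | (i : ℕ) < 3}

lemma mem_lowBlock {i : Fin 6} : i ∈ lowBlock ↔ (i : ℕ) < 3 := by
  simp [lowBlock]

variable {M : Type*} [CommMonoid M]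

def BlockBalanced (ζ : Fin 6 → M) : Prop := ζ 0 * ζ 1 * ζ 2 = ζ 3 * ζ 4 * ζ 5

lemma blockBalanced_iff_prod_lowBlock {ζ : Fin 6 → M} :
    BlockBalanced ζ ↔ ∏ i ∈ lowBlock, ζ i = ∏ i ∈ lowBlockᶜ, ζ i := by
  simp [BlockBalanced, lowBlock, Finset.prod_filter, Finset.compl_filter, Fin.prod_univ_six]

lemma BlockBalanced.comp_perm {ζ : Fin 6 → M} (hζ : BlockBalanced ζ) {σ : Perm (Fin 6)}
    (hσ : PreservesPartition σ) : BlockBalanced (ζ ∘ σ) := by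
  have reindex {s t : Finset (Fin 6)} (hst : ∀ i, i ∈ s ↔ σ i ∈ t) :
      ∏ i ∈ s, (ζ ∘ σ) i = ∏ i ∈ t, ζ i :=
    Finset.prod_equiv σ hst fun _ _ => rfl
  rw [blockBalanced_iff_prod_lowBlock] at hζ ⊢
  rcases hσ with hσ | hσ
  · rwa [reindex (t := lowBlock) (by simp [mem_lowBlock, hσ]),
      reindex (t := lowBlockᶜ) (by simp [mem_lowBlock, hσ])]
  · rw [reindex (t := lowBlockᶜ) (by simp [mem_lowBlock, hσ]),
      reindex (t := lowBlock) (by simp [mem_lowBlock, hσ]), hζ]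

lemma BlockBalanced.mul {ζ η : Fin 6 → M} (hζ : BlockBalanced ζ) (hη : BlockBalanced η) :
    BlockBalanced (ζ * η) := by
  rw [blockBalanced_iff_prod_lowBlock] at *
  simp only [Pi.mul_apply, Finset.prod_mul_distrib, hζ, hη]

lemma BlockBalanced.inv {G : Type*} [DivisionCommMonoid G] {ζ : Fin 6 → G}
    (hζ : BlockBalanced ζ) : BlockBalanced ζ⁻¹ := by
  rw [blockBalanced_iff_prod_lowBlock] at *
  simp only [Pi.inv_apply, Finset.prod_inv_distrib, hζ]

lemma blockBalanced_const (c : M) : BlockBalanced (fun _ : Fin 6 => c) := rfl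

end Blocks

section Admissible

def IsAdmissible (σ : Perm (Fin 6)) (ζ : Fin 6 → ℂ) : Prop :=
  PreservesPartition σ ∧ (∀ i, ζ i ^ 3 = 1) ∧ BlockBalanced ζ

variable {σ τ : Perm (Fin 6)} {ζ η : Fin 6 → ℂ}

lemma isAdmissible_of_preservesPartition (hσ : PreservesPartition σ) : IsAdmissible σ 1 :=
  ⟨hσ, fun _ => one_pow 3, blockBalanced_const 1⟩

lemma isAdmissible_of_blockBalanced (hζ : ∀ i, ζ i ^ 3 = 1) (hbal : BlockBalanced ζ) :
    IsAdmissible 1 ζ :=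
  ⟨preservesPartition_one, hζ, hbal⟩

lemma IsAdmissible.ne_zero (h : IsAdmissible σ ζ) (i : Fin 6) : ζ i ≠ 0 :=
  (IsUnit.of_pow_eq_one (h.2.1 i) three_ne_zero).ne_zero

lemma IsAdmissible.mul (hσ : IsAdmissible σ ζ) (hτ : IsAdmissible τ η) :
    IsAdmissible (τ * σ) ((ζ ∘ τ.symm) * η) :=
  ⟨hτ.1.mul hσ.1, fun i => by simp [mul_pow, hσ.2.1, hτ.2.1 i],
    (hσ.2.2.comp_perm hτ.1.inv).mul hτ.2.2⟩

lemma IsAdmissible.inv (h : IsAdmissible σ ζ) : IsAdmissible σ⁻¹ (ζ ∘ σ)⁻¹ :=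
  ⟨h.1.inv, fun i => by simp [inv_pow, h.2.1], (h.2.2.comp_perm h.1).inv⟩

def admissibleMonomials : Subgroup (GL (Fin 6) ℂ) where
  carrier := {A | ∃ σ ζ, IsAdmissible σ ζ ∧
    (A : Matrix (Fin 6) (Fin 6) ℂ) = σ.permMatrix ℂ * diagonal ζ}
  one_mem' := ⟨1, 1, isAdmissible_of_preservesPartition preservesPartition_one, by simp⟩
  mul_mem' := by
    rintro A B ⟨σ, ζ, hσ, eA⟩ ⟨τ, η, hτ, eB⟩
    exact ⟨_, _, hσ.mul hτ, by rw [Units.val_mul, eA, eB, permMatrix_mul_diagonal_mul]⟩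
  inv_mem' := by
    rintro A ⟨σ, ζ, h, eA⟩
    refine ⟨_, _, h.inv, Units.inv_eq_of_mul_eq_one_right ?_⟩
    rw [eA, permMatrix_mul_diagonal_mul, inv_mul_cancel, permMatrix_one, Matrix.one_mul,
      ← diagonal_one]
    congr 1
    ext i
    simp [Perm.inv_def, h.ne_zero]

lemma monomialGL_mem_admissibleMonomials (h : IsAdmissible σ ζ) :
    monomialGL σ ζ h.ne_zero ∈ admissibleMonomials :=
  ⟨σ, ζ, h, rfl⟩

lemma mk_mem_Hgroup_of_mem_admissibleMonomials {A : GL (Fin 6) ℂ}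
    (hA : A ∈ admissibleMonomials) : (QuotientGroup.mk A : PGL6) ∈ Hgroup := by
  obtain ⟨σ, ζ, ⟨hσ, hζ, hbal⟩, eA⟩ := hA
  have hsplit : A = permGL σ * monomialGL 1 ζ (isAdmissible_of_blockBalanced hζ hbal).ne_zero :=
    Units.ext (by simp [eA])
  rw [hsplit, QuotientGroup.mk_mul]
  exact mul_mem (Subgroup.subset_closure (Or.inl ⟨_, σ, hσ, by simp, rfl⟩))
    (Subgroup.subset_closure (Or.inr ⟨_, ζ, hζ, hbal, by simp, rfl⟩))

lemma Hgroup_le_map_admissibleMonomials :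
    Hgroup ≤ admissibleMonomials.map (QuotientGroup.mk' scalarSubgroup) := by
  refine (Subgroup.closure_le _).mpr ?_
  rintro x (⟨A, σ, hσ, eA, rfl⟩ | ⟨A, ζ, hζ, hbal, eA, rfl⟩)
  · exact ⟨A, ⟨σ, 1, isAdmissible_of_preservesPartition hσ, by simp [eA]⟩, rfl⟩
  · exact ⟨A, ⟨1, ζ, isAdmissible_of_blockBalanced hζ hbal, by simp [eA]⟩, rfl⟩

end Admissible

section Character

def admissibleToHgroup : admissibleMonomials →* Hgroup :=
  ((QuotientGroup.mk' scalarSubgroup).comp admissibleMonomials.subtype).codRestrict Hgroup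
    fun A => mk_mem_Hgroup_of_mem_admissibleMonomials A.2

lemma admissibleToHgroup_surjective : Function.Surjective admissibleToHgroup := by
  rintro ⟨x, hx⟩
  obtain ⟨A, hA, rfl⟩ := Hgroup_le_map_admissibleMonomials hx
  exact ⟨⟨A, hA⟩, rfl⟩

lemma mk_eq_mk_iff_exists_smul {A B : GL (Fin 6) ℂ} :
    (QuotientGroup.mk A : PGL6) = QuotientGroup.mk B ↔
      ∃ c : ℂˣ, (B : Matrix (Fin 6) (Fin 6) ℂ) = (c : ℂ) • (A : Matrix (Fin 6) (Fin 6) ℂ) := by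
  rw [QuotientGroup.eq]
  refine exists_congr fun c => ?_
  change GeneralLinearGroup.scalar (Fin 6) c = A⁻¹ * B ↔ _
  rw [eq_comm, inv_mul_eq_iff_eq_mul, Units.ext_iff, Units.val_mul,
    GeneralLinearGroup.coe_scalar, scalar_apply, ← smul_eq_mul_diagonal]

lemma det_eq_one_of_mk_eq_one {A : GL (Fin 6) ℂ} (hA : A ∈ admissibleMonomials)
    (h1 : (QuotientGroup.mk A : PGL6) = 1) : (A : Matrix (Fin 6) (Fin 6) ℂ).det = 1 := by
  obtain ⟨σ, ζ, h, eA⟩ := hA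
  obtain ⟨c, hc⟩ := mk_eq_mk_iff_exists_smul.mp
    (show (QuotientGroup.mk 1 : PGL6) = QuotientGroup.mk A by rw [h1]; rfl)
  have hscalar : (1 : Perm (Fin 6)).permMatrix ℂ * diagonal (fun _ => (c : ℂ)) =
      σ.permMatrix ℂ * diagonal ζ := by
    rw [← eA, hc, Units.val_one, permMatrix_one, Matrix.one_mul, ← smul_one_eq_diagonal]
  obtain ⟨rfl, rfl⟩ := (permMatrix_mul_diagonal_inj fun _ => c.ne_zero).mp hscalar
  rw [eA, det_permMatrix_mul_diagonal]
  calc _ = ((c : ℂ) ^ 3) ^ 2 := by simp [Finset.prod_const]; ring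
    _ = 1 := by rw [h.2.1 0, one_pow]

noncomputable def chi : Hgroup →* ℂˣ :=
  admissibleToHgroup.liftOfSurjective admissibleToHgroup_surjective
    ⟨(GeneralLinearGroup.det.comp admissibleMonomials.subtype)⁻¹, fun A hA => by
      have h1 : (QuotientGroup.mk (A : GL (Fin 6) ℂ) : PGL6) = 1 := congrArg Subtype.val hA
      simp [MonoidHom.mem_ker, Units.ext_iff, det_eq_one_of_mk_eq_one A.2 h1]⟩

lemma chi_admissibleToHgroup (A : admissibleMonomials) :
    (chi (admissibleToHgroup A) : ℂ) = ((A : GL (Fin 6) ℂ) : Matrix (Fin 6) (Fin 6) ℂ).det⁻¹ := by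
  simp [chi]

lemma chi_mk {A : GL (Fin 6) ℂ} (hA : A ∈ admissibleMonomials)
    (hmem : (QuotientGroup.mk A : PGL6) ∈ Hgroup) :
    (chi ⟨_, hmem⟩ : ℂ) = (A : Matrix (Fin 6) (Fin 6) ℂ).det⁻¹ :=
  chi_admissibleToHgroup ⟨A, hA⟩

end Character

section Values

lemma blockSwap_swapsBlocks : ∀ i : Fin 6, ((blockSwap i : ℕ) < 3 ↔ ¬ (i : ℕ) < 3) := by
  decide

lemma blockSwap_mul_self : blockSwap * blockSwap = 1 := by decide

lemma sign_blockSwap : Perm.sign blockSwap = -1 := by decide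

lemma chi_mk_permMatrix {A : GL (Fin 6) ℂ} {σ : Perm (Fin 6)} (hσ : PreservesPartition σ)
    (hA : (A : Matrix (Fin 6) (Fin 6) ℂ) = σ.permMatrix ℂ)
    (hmem : (QuotientGroup.mk A : PGL6) ∈ Hgroup) :
    (chi ⟨_, hmem⟩ : ℂ) = ((Perm.sign σ : ℤ) : ℂ) := by
  rw [chi_mk ⟨σ, 1, isAdmissible_of_preservesPartition hσ, by simp [hA]⟩, hA, det_permutation]
  rcases Int.units_eq_one_or (Perm.sign σ) with h | h <;> simp [h]

lemma chi_mk_diagonal {A : GL (Fin 6) ℂ} {ζ : Fin 6 → ℂ} (hζ : ∀ i, ζ i ^ 3 = 1)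
    (hbal : BlockBalanced ζ) (hA : (A : Matrix (Fin 6) (Fin 6) ℂ) = diagonal ζ)
    (hmem : (QuotientGroup.mk A : PGL6) ∈ Hgroup) :
    (chi ⟨_, hmem⟩ : ℂ) = ζ 0 * ζ 1 * ζ 2 := by
  rw [chi_mk ⟨1, ζ, isAdmissible_of_blockBalanced hζ hbal, by simp [hA]⟩, hA, det_diagonal,
    Fin.prod_univ_six]
  refine inv_eq_of_mul_eq_one_left ?_
  calc ζ 0 * ζ 1 * ζ 2 * (ζ 0 * ζ 1 * ζ 2 * ζ 3 * ζ 4 * ζ 5)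
      = (ζ 0 * ζ 1 * ζ 2) ^ 2 * (ζ 3 * ζ 4 * ζ 5) := by ring
    _ = ζ 0 ^ 3 * ζ 1 ^ 3 * ζ 2 ^ 3 := by rw [← hbal]; ring
    _ = 1 := by simp [hζ]

lemma chiCond_chi : ChiCond chi :=
  ⟨fun _ _ hσ hA hmem => chi_mk_permMatrix (Or.inl hσ) hA hmem,
    fun _ hA hmem => by simp [chi_mk_permMatrix (Or.inr blockSwap_swapsBlocks) hA hmem,
      sign_blockSwap],
    fun _ _ hζ hbal hA hmem => chi_mk_diagonal hζ hbal hA hmem⟩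

lemma ChiCond.apply_permMatrix {χ : Hgroup →* ℂˣ} (hχ : ChiCond χ) {A : GL (Fin 6) ℂ}
    {σ : Perm (Fin 6)} (hσ : PreservesPartition σ)
    (hA : (A : Matrix (Fin 6) (Fin 6) ℂ) = σ.permMatrix ℂ)
    (hmem : (QuotientGroup.mk A : PGL6) ∈ Hgroup) :
    (χ ⟨_, hmem⟩ : ℂ) = ((Perm.sign σ : ℤ) : ℂ) := by
  rcases hσ with hσ | hσ
  · exact hχ.1 A σ hσ hA hmem
  -- `σ = τ * blockSwap` with `τ` block-preserving, so (1) and (2) apply to the two factors.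
  set τ := σ * blockSwap
  have hτ : ∀ i : Fin 6, ((τ i : ℕ) < 3 ↔ (i : ℕ) < 3) := fun i =>
    ((hσ (blockSwap i)).trans (not_congr (blockSwap_swapsBlocks i))).trans not_not
  have hστ : σ = τ * blockSwap := by rw [mul_assoc, blockSwap_mul_self, mul_one]
  set B : GL (Fin 6) ℂ := permGL blockSwap
  set C : GL (Fin 6) ℂ := permGL τ
  have hB : (QuotientGroup.mk B : PGL6) ∈ Hgroup :=
    Subgroup.subset_closure (Or.inl ⟨B, _, Or.inr blockSwap_swapsBlocks, by simp [B], rfl⟩)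
  have hC : (QuotientGroup.mk C : PGL6) ∈ Hgroup :=
    Subgroup.subset_closure (Or.inl ⟨C, τ, Or.inl hτ, by simp [C], rfl⟩)
  have hsplit : (⟨_, hmem⟩ : Hgroup) = ⟨_, hB⟩ * ⟨_, hC⟩ := by
    have : A = B * C := Units.ext (by rw [hA, hστ]; simp [B, C])
    exact Subtype.ext (congrArg QuotientGroup.mk this)
  have hsign : Perm.sign τ = -Perm.sign σ := by simp [τ, sign_blockSwap]
  rw [hsplit, map_mul, Units.val_mul, hχ.2.1 B (by simp [B]) hB, hχ.1 C τ hτ (by simp [C]) hC,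
    hsign]
  push_cast
  ring

lemma ChiCond.eq {χ₁ χ₂ : Hgroup →* ℂˣ} (h₁ : ChiCond χ₁) (h₂ : ChiCond χ₂) : χ₁ = χ₂ := by
  have hgen : Subgroup.closure (((↑) : Hgroup → PGL6) ⁻¹' (permGens ∪ diagGens)) = ⊤ :=
    Subgroup.closure_closure_coe_preimage
  refine MonoidHom.eq_of_eqOn_dense hgen ?_
  rintro ⟨x, hx⟩ (⟨A, σ, hσ, hA, rfl⟩ | ⟨A, ζ, hζ, hbal, hA, rfl⟩) <;> ext
  · rw [h₁.apply_permMatrix hσ hA, h₂.apply_permMatrix hσ hA]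
  · rw [h₁.2.2 A ζ hζ hbal hA, h₂.2.2 A ζ hζ hbal hA]

end Values

section Order

instance : DecidablePred PreservesPartition := fun σ => by
  unfold PreservesPartition; infer_instance

lemma card_preservesPartition : Nat.card {σ : Perm (Fin 6) // PreservesPartition σ} = 72 := by
  rw [Nat.card_eq_fintype_card]; decide

lemma card_cubeRoots : Nat.card {z : ℂ // z ^ 3 = 1} = 3 := by
  rw [Nat.card_congr (Equiv.subtypeEquivRight fun z =>
      (Polynomial.mem_nthRootsFinset (by norm_num) (1 : ℂ) (x := z)).symm),
    Nat.card_eq_fintype_card, Fintype.card_coe,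
    (Complex.isPrimitiveRoot_exp 3 (by norm_num)).card_nthRootsFinset]

def NormalizedDiagonal : Set (Fin 6 → ℂ) := {ζ | (∀ i, ζ i ^ 3 = 1) ∧ BlockBalanced ζ ∧ ζ 0 = 1}

def normalizedDiagonalEquiv : NormalizedDiagonal ≃ (Fin 4 → {z : ℂ // z ^ 3 = 1}) where
  toFun ζ k := ⟨ζ.1 k.succ.castSucc, ζ.2.1 _⟩
  -- `ζ₅ = ζ₁ζ₂ / (ζ₃ζ₄)`, written with `z⁻¹ = z²` for cube roots of unity.
  invFun b := ⟨![1, b 0, b 1, b 2, b 3, b 0 * b 1 * (b 2 * b 3) ^ 2], by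
    refine ⟨fun i => ?_, ?_, rfl⟩
    · have h6 : ∀ k, (b k : ℂ) ^ 6 = 1 := fun k => by rw [pow_mul (b k : ℂ) 3 2, (b k).2, one_pow]
      fin_cases i <;> simp [mul_pow, ← pow_mul, (b _).2, h6]
    · show 1 * (b 0 : ℂ) * b 1 = b 2 * b 3 * (b 0 * b 1 * (b 2 * b 3) ^ 2)
      linear_combination (-(b 0 * b 1 * (b 2 : ℂ) ^ 3)) * (b 3).2 - (b 0 * b 1 : ℂ) * (b 2).2⟩
  left_inv ζ := by
    obtain ⟨ζ, hζ, hbal, h0⟩ := ζ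
    have h5 : ζ 1 * ζ 2 * (ζ 3 * ζ 4) ^ 2 = ζ 5 := by
      unfold BlockBalanced at hbal
      rw [h0] at hbal
      linear_combination (ζ 3 * ζ 4) ^ 2 * hbal + ζ 5 * (ζ 3 ^ 3 * hζ 4 + hζ 3)
    ext i
    fin_cases i <;> simp [h0, h5]
  right_inv b := by
    ext k
    fin_cases k <;> rfl

lemma card_normalizedDiagonal : Nat.card NormalizedDiagonal = 81 := by
  rw [Nat.card_congr normalizedDiagonalEquiv, Nat.card_fun, card_cubeRoots,
    Nat.card_eq_fintype_card, Fintype.card_fin]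
  norm_num

noncomputable def normalForm
    (p : {σ : Perm (Fin 6) // PreservesPartition σ} × NormalizedDiagonal) : Hgroup :=
  admissibleToHgroup ⟨_, monomialGL_mem_admissibleMonomials
    (show IsAdmissible p.1 p.2 from ⟨p.1.2, p.2.2.1, p.2.2.2.1⟩)⟩

lemma normalForm_injective : Function.Injective normalForm := by
  rintro ⟨⟨σ, hσ⟩, ⟨ζ, hζ, hbal, h0⟩⟩ ⟨⟨τ, hτ⟩, ⟨η, hη, hbal', h0'⟩⟩ h
  obtain ⟨c, hc⟩ := mk_eq_mk_iff_exists_smul.mp (congrArg Subtype.val h)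
  replace hc : τ.permMatrix ℂ * diagonal η = σ.permMatrix ℂ * diagonal ((c : ℂ) • ζ) := by
    rw [← smul_permMatrix_mul_diagonal]; exact hc
  obtain ⟨rfl, rfl⟩ :=
    (permMatrix_mul_diagonal_inj (IsAdmissible.ne_zero (σ := τ) ⟨hτ, hη, hbal'⟩)).mp hc
  have hc1 : (c : ℂ) = 1 := by simpa [h0] using h0'
  simp [hc1]

lemma normalForm_surjective : Function.Surjective normalForm := by
  intro x
  obtain ⟨⟨A, σ, ζ, h, eA⟩, rfl⟩ := admissibleToHgroup_surjective x
  have h0 := h.ne_zero 0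
  refine ⟨⟨⟨σ, h.1⟩, ⟨(ζ 0)⁻¹ • ζ, fun i => ?_, (blockBalanced_const _).mul h.2.2, ?_⟩⟩,
    Subtype.ext (mk_eq_mk_iff_exists_smul.mpr ⟨Units.mk0 (ζ 0) h0, ?_⟩)⟩
  · simp [mul_pow, h.2.1]
  · simp [h0]
  · change (A : Matrix (Fin 6) (Fin 6) ℂ) = ζ 0 • (σ.permMatrix ℂ * diagonal ((ζ 0)⁻¹ • ζ))
    rw [eA, smul_permMatrix_mul_diagonal, smul_smul, mul_inv_cancel₀ h0, one_smul]

lemma card_Hgroup : Nat.card Hgroup = 5832 := by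
  rw [← Nat.card_eq_of_bijective _ ⟨normalForm_injective, normalForm_surjective⟩, Nat.card_prod,
    card_preservesPartition, card_normalizedDiagonal]

lemma chi_pow_six (x : Hgroup) : chi x ^ 6 = 1 := by
  obtain ⟨⟨A, σ, ζ, h, eA⟩, rfl⟩ := admissibleToHgroup_surjective x
  have hsign : ((Perm.sign σ : ℤ) : ℂ) ^ 6 = 1 := by
    rcases Int.units_eq_one_or (Perm.sign σ) with hs | hs <;> norm_num [hs]
  have hζ : ∀ i, ζ i ^ 6 = 1 := fun i => by rw [pow_mul (ζ i) 3 2, h.2.1 i, one_pow]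
  ext
  rw [Units.val_pow_eq_pow_val, chi_admissibleToHgroup, eA, det_permMatrix_mul_diagonal, inv_pow,
    mul_pow, ← Finset.prod_pow, hsign, Finset.prod_eq_one fun i _ => hζ i]
  simp

lemma card_range_chi : Nat.card chi.range = 6 := by
  have hdvd : Nat.card chi.range ∣ 6 := by
    have hle : chi.range ≤ rootsOfUnity 6 ℂ := by
      rintro _ ⟨x, rfl⟩
      exact (mem_rootsOfUnity 6 _).mpr (chi_pow_six x)
    have := Subgroup.card_dvd_of_le hle
    rwa [Complex.card_rootsOfUnity] at this
  have h2 : 2 ∣ Nat.card chi.range := by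
    set σ : Perm (Fin 6) := swap 0 1
    have hσ : PreservesPartition σ := Or.inl (by decide)
    have hmem : (QuotientGroup.mk (permGL σ) : PGL6) ∈ Hgroup :=
      Subgroup.subset_closure (Or.inl ⟨_, σ, hσ, by simp, rfl⟩)
    have hval : (chi ⟨_, hmem⟩ : ℂ) = -1 := by
      rw [chi_mk_permMatrix hσ (by simp) hmem, Perm.sign_swap (by decide)]
      simp
    have : Fact (Nat.Prime 2) := ⟨Nat.prime_two⟩
    refine chi.range.prime_dvd_card_of_mem ⟨⟨_, hmem⟩, rfl⟩ (Units.ext ?_) fun h => ?_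
    · simp [hval]
    · have := congrArg Units.val h
      norm_num [hval] at this
  have h3 : 3 ∣ Nat.card chi.range := by
    obtain ⟨ω, hω⟩ : ∃ ω : ℂ, IsPrimitiveRoot ω 3 :=
      ⟨_, Complex.isPrimitiveRoot_exp 3 (by norm_num)⟩
    set ζ : Fin 6 → ℂ := ![ω, 1, 1, ω, 1, 1]
    have hζ : ∀ i, ζ i ^ 3 = 1 := by
      intro i; fin_cases i <;> simp [ζ, hω.pow_eq_one]
    have hbal : BlockBalanced ζ := by simp [BlockBalanced, ζ]
    have hmem : (QuotientGroup.mk (monomialGL 1 ζ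
        (isAdmissible_of_blockBalanced hζ hbal).ne_zero) : PGL6) ∈ Hgroup :=
      Subgroup.subset_closure (Or.inr ⟨_, ζ, hζ, hbal, by simp, rfl⟩)
    have hval : (chi ⟨_, hmem⟩ : ℂ) = ω := by
      rw [chi_mk_diagonal hζ hbal (by simp) hmem]
      simp [ζ]
    have : Fact (Nat.Prime 3) := ⟨Nat.prime_three⟩
    refine chi.range.prime_dvd_card_of_mem ⟨⟨_, hmem⟩, rfl⟩ (Units.ext ?_) fun h => ?_
    · simp [hval, hω.pow_eq_one]
    · exact hω.ne_one (by norm_num) (by simpa [hval] using congrArg Units.val h)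
  exact Nat.dvd_antisymm hdvd (Nat.Coprime.mul_dvd_of_dvd_of_dvd (by norm_num) h2 h3)

end Order

/-- There is a (unique) group homomorphism `χ : H → ℂˣ` taking the
prescribed values on the generators of `H`; its kernel is a subgroup of index `6` in
`H`, of order `972`. -/
theorem exists_character_of_H :
    ∃ χ : Hgroup →* ℂˣ, ChiCond χ ∧ (∀ χ' : Hgroup →* ℂˣ, ChiCond χ' → χ' = χ) ∧
      χ.ker.index = 6 ∧ Nat.card χ.ker = 972 := by
  have hindex : chi.ker.index = 6 := by rw [Subgroup.index_ker, card_range_chi]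
  refine ⟨chi, chiCond_chi, fun χ' h => h.eq chiCond_chi, hindex, ?_⟩
  have hcard := chi.ker.card_mul_index
  rw [hindex, card_Hgroup] at hcard
  omega
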